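/- arXiv:1711.02118 — 2 statements merged into one kernel-verified Lean document; each statement's English description precedes it below -/
import Mathlib

section
/- Let θ₁, θ₂ be functions from the set of primes to (0, π) whose pairs are equidistributed with respect to the 2-product Sato-Tate measure, i.e. for all subintervals I₁, I₂ ⊆ [0, π], lim_{x→∞} #{p prime, p ≤ x : (θ₁(p), θ₂(p)) ∈ I₁ × I₂} / #{p prime, p ≤ x} = (4/π²)·∫_{I₁}∫_{I₂} sin²(t₁) sin²(t₂) dt₂ dt₁. Let c₁, c₂ be functions from the set of primes to [−1, 1], let ν be a positive odd integer, and for i = 1, 2 set bᵢ(p) = sin((ν+1)θᵢ(p)) − (cᵢ(p)/√p)·sin(νθᵢ(p)). Then the set of primes p with b₁(p)·b₂(p) > 0 has natural density 1/2. -/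
/-!
Put `n = ν + 1`, which is even. On the strip `jπ/n + δ ≤ θ ≤ (j+1)π/n - δ` the main term
`sin (nθ)` of `bᵢ` has sign `(-1)^j` and size at least `sin (nδ)`, which beats the perturbation
`|cᵢ(p)/√p · sin (νθ)| ≤ 1/√p` for all large `p`. Hence on the product of the strips `i` and `j`
the sign of `b₁ b₂` is `(-1)^(i+j)`, and equidistribution bounds the densities of `b₁ b₂ > 0` and
of `b₁ b₂ < 0` from below by sums of products `μᵢ μⱼ` of Sato–Tate masses of strips over `i + j`
even, resp. odd. As `δ → 0` these sums tend to `(1 ± (∑ⱼ (-1)^j μⱼ)²) / 2`, and the alternating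
sum vanishes because `θ ↦ π - θ` preserves the Sato–Tate measure and exchanges the strips `j` and
`n - 1 - j`, of opposite parity.
-/

open Real Filter MeasureTheory Finset Topology

noncomputable def primeProportion (P : ℕ → Prop) (x : ℕ) : ℝ :=
  (Nat.card {p : ℕ | p ≤ x ∧ p.Prime ∧ P p} : ℝ) / (Nat.card {p : ℕ | p ≤ x ∧ p.Prime} : ℝ)

lemma primeProportion_eq (P : ℕ → Prop) [DecidablePred P] (x : ℕ) :
    primeProportion P x = (#{p ∈ Nat.primesLE x | P p} : ℝ) / Nat.primeCounting x := by
  have hnum : {p : ℕ | p ≤ x ∧ p.Prime ∧ P p} = ↑{p ∈ Nat.primesLE x | P p} := by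
    ext p
    simp [Nat.mem_primesLE, and_assoc]
  have hden : {p : ℕ | p ≤ x ∧ p.Prime} = ↑(Nat.primesLE x) := by
    ext p
    simp [Nat.mem_primesLE]
  rw [primeProportion, hnum, hden, Nat.card_coe_set_eq, Nat.card_coe_set_eq, Set.ncard_coe_finset,
    Set.ncard_coe_finset, Nat.primesLE_card_eq_primeCounting]

lemma primeProportion_mono {P Q : ℕ → Prop} (h : ∀ p, p.Prime → P p → Q p) (x : ℕ) :
    primeProportion P x ≤ primeProportion Q x := by
  classical
  rw [primeProportion_eq, primeProportion_eq]
  gcongr with p hp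
  exact h p (Nat.prime_of_mem_primesLE hp)

lemma primeProportion_or_le (P Q : ℕ → Prop) (x : ℕ) :
    primeProportion (fun p => P p ∨ Q p) x ≤ primeProportion P x + primeProportion Q x := by
  classical
  simp only [primeProportion_eq, ← add_div, filter_or]
  gcongr
  exact_mod_cast card_union_le _ _

lemma primeProportion_exists_mem {ι : Type*} (K : Finset ι) {P : ι → ℕ → Prop}
    (hP : (K : Set ι).PairwiseDisjoint fun k => {p | P k p}) (x : ℕ) :
    primeProportion (fun p => ∃ k ∈ K, P k p) x = ∑ k ∈ K, primeProportion (P k) x := by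
  classical
  have hunion : {p ∈ Nat.primesLE x | ∃ k ∈ K, P k p} =
      K.biUnion fun k => {p ∈ Nat.primesLE x | P k p} := by
    ext p
    simp only [mem_filter, mem_biUnion]
    tauto
  have hdisj : (K : Set ι).PairwiseDisjoint fun k => {p ∈ Nat.primesLE x | P k p} :=
    fun k hk l hl hkl =>
      disjoint_filter.2 fun p _ hpk hpl => Set.disjoint_left.1 (hP hk hl hkl) hpk hpl
  simp only [primeProportion_eq, ← sum_div, hunion, card_biUnion hdisj, Nat.cast_sum]

lemma primeProportion_add_primeProportion_not (P : ℕ → Prop) {x : ℕ} (hx : 2 ≤ x) :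
    primeProportion P x + primeProportion (fun p => ¬P p) x = 1 := by
  classical
  have : (Nat.primeCounting x : ℝ) ≠ 0 := by
    exact_mod_cast Nat.primeCounting_eq_zero_iff.not.mpr (by omega)
  rw [primeProportion_eq, primeProportion_eq, ← add_div, div_eq_one_iff_eq this]
  rw [← Nat.primesLE_card_eq_primeCounting,
    ← card_filter_add_card_filter_not (s := Nat.primesLE x) P]
  push_cast
  rfl

lemma tendsto_primeProportion_le (N : ℕ) :
    Tendsto (primeProportion (· ≤ N)) atTop (𝓝 0) := by
  have hprimes : ∀ x ≥ N, {p ∈ Nat.primesLE x | p ≤ N} = Nat.primesLE N := fun x hx => by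
    ext p
    simp only [mem_filter, Nat.mem_primesLE]
    exact ⟨fun h => ⟨h.2, h.1.2⟩, fun h => ⟨⟨h.1.trans hx, h.2⟩, h.1⟩⟩
  refine ((tendsto_const_nhds (x := (Nat.primeCounting N : ℝ))).div_atTop
    (tendsto_natCast_atTop_atTop.comp Nat.tendsto_primeCounting)).congr' ?_
  filter_upwards [eventually_ge_atTop N] with x hx
  rw [primeProportion_eq, hprimes x hx, Nat.primesLE_card_eq_primeCounting]
  rfl

lemma eventually_lt_primeProportion {ι : Type*} (K : Finset ι) {P : ι → ℕ → Prop}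
    {Q : ℕ → Prop} {α : ι → ℝ} (hdisj : (K : Set ι).PairwiseDisjoint fun k => {p | P k p})
    (hPQ : ∀ᶠ p in atTop, p.Prime → ∀ k ∈ K, P k p → Q p)
    (hP : ∀ k ∈ K, Tendsto (primeProportion (P k)) atTop (𝓝 (α k)))
    {a : ℝ} (ha : a < ∑ k ∈ K, α k) :
    ∀ᶠ x in atTop, a < primeProportion Q x := by
  obtain ⟨N, hN⟩ := eventually_atTop.1 hPQ
  have hbound (x : ℕ) :
      ∑ k ∈ K, primeProportion (P k) x ≤ primeProportion Q x + primeProportion (· ≤ N) x :=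
    calc ∑ k ∈ K, primeProportion (P k) x
        = primeProportion (fun p => ∃ k ∈ K, P k p) x := (primeProportion_exists_mem K hdisj x).symm
      _ ≤ primeProportion (fun p => Q p ∨ p ≤ N) x :=
        primeProportion_mono (fun p hp ⟨k, hk, hpk⟩ =>
          (le_or_gt p N).elim Or.inr fun hNp => Or.inl (hN p hNp.le hp k hk hpk)) x
      _ ≤ _ := primeProportion_or_le _ _ x
  have hlim : Tendsto (fun x => ∑ k ∈ K, primeProportion (P k) x - primeProportion (· ≤ N) x)
      atTop (𝓝 (∑ k ∈ K, α k - 0)) :=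
    (tendsto_finsetSum K hP).sub (tendsto_primeProportion_le N)
  filter_upwards [hlim.eventually (lt_mem_nhds (by simpa using ha))] with x hx
  linarith [hbound x]

lemma tendsto_primeProportion_of_forall_lt {Q : ℕ → Prop} {c : ℝ}
    (hQ : ∀ a < c, ∀ᶠ x in atTop, a < primeProportion Q x)
    (hnotQ : ∀ a < 1 - c, ∀ᶠ x in atTop, a < primeProportion (fun p => ¬Q p) x) :
    Tendsto (primeProportion Q) atTop (𝓝 c) := by
  refine tendsto_order.2 ⟨hQ, fun a ha => ?_⟩
  filter_upwards [hnotQ (1 - a) (by linarith), eventually_ge_atTop 2] with x hx h2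
  linarith [primeProportion_add_primeProportion_not Q h2]

lemma two_mul_ite_even {R : Type*} [CommRing R] (k : ℕ) (x : R) :
    2 * (if Even k then x else 0) = (1 + (-1) ^ k) * x := by
  rcases Nat.even_or_odd k with hk | hk
  · rw [if_pos hk, hk.neg_one_pow]
    ring
  · rw [if_neg (Nat.not_even_iff_odd.2 hk), hk.neg_one_pow]
    ring

lemma two_mul_sum_filter_even_add {R : Type*} [CommRing R] (s : Finset ℕ) (w : ℕ → R) (e : ℕ) :
    2 * ∑ ij ∈ s ×ˢ s with Even (ij.1 + ij.2 + e), w ij.1 * w ij.2 =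
      (∑ i ∈ s, w i) ^ 2 + (-1) ^ e * (∑ i ∈ s, (-1) ^ i * w i) ^ 2 := by
  rw [sum_filter, mul_sum, sum_product, sq, sq, sum_mul_sum, sum_mul_sum, mul_sum,
    ← sum_add_distrib]
  refine sum_congr rfl fun i _ => ?_
  rw [mul_sum, ← sum_add_distrib]
  refine sum_congr rfl fun j _ => ?_
  rw [two_mul_ite_even, pow_add, pow_add]
  ring

noncomputable def satoTateMass (a b : ℝ) : ℝ := 2 / π * ∫ x in a..b, sin x ^ 2

lemma satoTateMass_eq (a b : ℝ) :
    satoTateMass a b = (sin a * cos a - sin b * cos b + b - a) / π := by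
  rw [satoTateMass, integral_sin_sq]
  field_simp

@[fun_prop]
lemma Continuous.satoTateMass {X : Type*} [TopologicalSpace X] {f g : X → ℝ}
    (hf : Continuous f) (hg : Continuous g) : Continuous fun x => satoTateMass (f x) (g x) := by
  simp only [satoTateMass_eq]
  fun_prop

lemma satoTateMass_add_satoTateMass (a b c : ℝ) :
    satoTateMass a b + satoTateMass b c = satoTateMass a c := by
  simp only [satoTateMass_eq]
  ring

lemma satoTateMass_pi_sub (a b : ℝ) : satoTateMass (π - b) (π - a) = satoTateMass a b := by
  simp only [satoTateMass_eq, sin_pi_sub, cos_pi_sub]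
  ring

lemma satoTateMass_zero_pi : satoTateMass 0 π = 1 := by
  simp [satoTateMass_eq, pi_ne_zero]

lemma sum_range_satoTateMass (f : ℕ → ℝ) (k : ℕ) :
    ∑ j ∈ range k, satoTateMass (f j) (f (j + 1)) = satoTateMass (f 0) (f k) := by
  induction k with
  | zero => simp [satoTateMass]
  | succ k ih => rw [sum_range_succ, ih, satoTateMass_add_satoTateMass]

lemma sum_satoTateMass_strips {n : ℕ} (hn : n ≠ 0) :
    ∑ j ∈ range n, satoTateMass (j * π / n) ((j + 1) * π / n) = 1 := by
  have := sum_range_satoTateMass (fun j : ℕ => j * π / n) n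
  push_cast at this
  rw [this]
  simp [hn, satoTateMass_zero_pi]

lemma sum_neg_one_pow_mul_satoTateMass_strips {n : ℕ} (hn : Even n) :
    ∑ j ∈ range n, (-1) ^ j * satoTateMass (j * π / n) ((j + 1) * π / n) = 0 := by
  set m : ℕ → ℝ := fun j => satoTateMass (j * π / n) ((j + 1) * π / n)
  have hreflect (j : ℕ) (hj : j < n) :
      (-1) ^ (n - 1 - j) * m (n - 1 - j) = -((-1) ^ j * m j) := by
    have hn0 : (n : ℝ) ≠ 0 := by exact_mod_cast (show n ≠ 0 by omega)
    have hm : m (n - 1 - j) = m j := by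
      simp only [m]
      rw [← satoTateMass_pi_sub]
      simp only [Nat.cast_sub (show j ≤ n - 1 by omega), Nat.cast_sub (show 1 ≤ n by omega)]
      congr 1 <;> field_simp <;> ring
    have hsign : (-1 : ℝ) ^ (n - 1 - j) * (-1) ^ (j + 1) = 1 := by
      rw [← pow_add, show n - 1 - j + (j + 1) = n by omega, hn.neg_one_pow]
    have hsq : ((-1 : ℝ) ^ j) ^ 2 = 1 := by rw [← pow_mul, pow_mul']; norm_num
    rw [hm]
    linear_combination (-((-1) ^ j * m j)) * hsign - m j * (-1) ^ (n - 1 - j) * hsq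
  have := sum_range_reflect (fun j => (-1 : ℝ) ^ j * m j) n
  rw [sum_congr rfl fun j hj => hreflect j (mem_range.1 hj), sum_neg_distrib] at this
  linarith

lemma sin_le_sin_of_mem_Icc {c x : ℝ} (hc : -(π / 2) ≤ c) (hx : x ∈ Set.Icc c (π - c)) :
    sin c ≤ sin x := by
  rcases le_total x (π / 2) with h | h
  · exact sin_le_sin_of_le_of_le_pi_div_two hc h hx.1
  · rw [← sin_pi_sub x]
    exact sin_le_sin_of_le_of_le_pi_div_two hc (by linarith) (by linarith [hx.2])

lemma sin_le_neg_one_pow_mul_sin (j : ℕ) {c u : ℝ} (hc : -(π / 2) ≤ c)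
    (hu : u ∈ Set.Icc (j * π + c) ((j + 1) * π - c)) : sin c ≤ (-1) ^ j * sin u := by
  have hshift := sin_add_nat_mul_pi (u - j * π) j
  have hsq : (-1 : ℝ) ^ j * (-1) ^ j = 1 := by rw [← mul_pow]; norm_num
  rw [sub_add_cancel] at hshift
  rw [hshift, ← mul_assoc, hsq, one_mul]
  exact sin_le_sin_of_mem_Icc hc ⟨by linarith [hu.1], by linarith [hu.2]⟩

lemma neg_one_pow_mul_sub_pos_of_mem_strip {ω δ θ e : ℝ} (hω : 0 < ω) (hδ : 0 ≤ δ) {j : ℕ}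
    (hθ : θ ∈ Set.Icc (j * π / ω + δ) ((j + 1) * π / ω - δ)) (he : |e| < sin (ω * δ)) :
    0 < (-1) ^ j * (sin (ω * θ) - e) := by
  have hu : ω * θ ∈ Set.Icc (j * π + ω * δ) ((j + 1) * π - ω * δ) := by
    have h₁ := mul_le_mul_of_nonneg_left hθ.1 hω.le
    have h₂ := mul_le_mul_of_nonneg_left hθ.2 hω.le
    rw [mul_add, mul_div_cancel₀ _ hω.ne'] at h₁
    rw [mul_sub, mul_div_cancel₀ _ hω.ne'] at h₂
    exact ⟨h₁, h₂⟩
  have hsin := sin_le_neg_one_pow_mul_sin j (by nlinarith [pi_pos]) hu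
  have habs : |(-1) ^ j * e| = |e| := by simp
  rw [mul_sub]
  linarith [le_abs_self ((-1) ^ j * e)]

noncomputable def signTerm (ν : ℕ) (θ c : ℕ → ℝ) (p : ℕ) : ℝ :=
  sin ((ν + 1) * θ p) - c p / √p * sin (ν * θ p)

lemma eventually_neg_one_pow_mul_signTerm_pos {ν : ℕ} {θ c : ℕ → ℝ}
    (hc : ∀ p : ℕ, p.Prime → c p ∈ Set.Icc (-1 : ℝ) 1) {δ : ℝ} (hδ : 0 < δ)
    (hδν : (ν + 1) * δ < π) :
    ∀ᶠ p in atTop, p.Prime → ∀ j : ℕ,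
      θ p ∈ Set.Icc (j * π / (ν + 1) + δ) ((j + 1) * π / (ν + 1) - δ) →
        0 < (-1) ^ j * signTerm ν θ c p := by
  have hsin : 0 < sin ((ν + 1) * δ) := sin_pos_of_pos_of_lt_pi (by positivity) hδν
  have hlim : Tendsto (fun p : ℕ => 1 / √p) atTop (𝓝 0) := by
    simpa only [one_div, Function.comp_def] using
      tendsto_inv_atTop_zero.comp (tendsto_sqrt_atTop.comp tendsto_natCast_atTop_atTop)
  filter_upwards [hlim.eventually (gt_mem_nhds hsin)] with p hp hprime j hθ
  refine neg_one_pow_mul_sub_pos_of_mem_strip (by positivity) hδ.le hθ (lt_of_le_of_lt ?_ hp)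
  rw [abs_mul, abs_div, abs_of_nonneg (sqrt_nonneg _)]
  calc |c p| / √p * |sin (ν * θ p)| ≤ 1 / √p * 1 := by
        gcongr
        · exact abs_le.2 (hc p hprime)
        · exact abs_sin_le_one _
    _ = 1 / √p := mul_one _

lemma exists_lt_sum_satoTateMass_strips {n : ℕ} (hn : Even n) (hn0 : n ≠ 0) (e : ℕ) {a : ℝ}
    (ha : a < 1 / 2) :
    ∃ δ ∈ Set.Ioo 0 (π / (2 * n)), a < ∑ ij ∈ range n ×ˢ range n with Even (ij.1 + ij.2 + e),
      satoTateMass (ij.1 * π / n + δ) ((ij.1 + 1) * π / n - δ) *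
        satoTateMass (ij.2 * π / n + δ) ((ij.2 + 1) * π / n - δ) := by
  set F : ℝ → ℝ := fun δ => ∑ ij ∈ range n ×ˢ range n with Even (ij.1 + ij.2 + e),
    satoTateMass (ij.1 * π / n + δ) ((ij.1 + 1) * π / n - δ) *
      satoTateMass (ij.2 * π / n + δ) ((ij.2 + 1) * π / n - δ)
  have hF0 : F 0 = 1 / 2 := by
    have := two_mul_sum_filter_even_add (range n)
      (fun j => satoTateMass (j * π / n) ((j + 1) * π / n)) e
    simp only [sum_satoTateMass_strips hn0, sum_neg_one_pow_mul_satoTateMass_strips hn] at this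
    simp only [F, add_zero, sub_zero]
    linarith
  have hF : Continuous F := by fun_prop
  have hn : (0 : ℝ) < n := by exact_mod_cast Nat.pos_of_ne_zero hn0
  have hlim : ∀ᶠ δ in 𝓝[>] 0, a < F δ :=
    (hF.tendsto 0).mono_left nhdsWithin_le_nhds |>.eventually (lt_mem_nhds (hF0 ▸ ha))
  obtain ⟨δ, hδF, hδ⟩ :=
    (hlim.and (Ioo_mem_nhdsGT (show (0 : ℝ) < π / (2 * n) by positivity))).exists
  exact ⟨δ, hδ, hδF⟩

lemma disjoint_strips {ω δ : ℝ} (hω : 0 < ω) (hδ : 0 < δ) {i j : ℕ} (hij : i ≠ j) :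
    Disjoint (Set.Icc (i * π / ω + δ) ((i + 1) * π / ω - δ))
      (Set.Icc (j * π / ω + δ) ((j + 1) * π / ω - δ)) := by
  wlog hlt : i < j generalizing i j
  · exact (this hij.symm (by omega)).symm
  have hle : ((i : ℝ) + 1) * π / ω ≤ j * π / ω := by
    gcongr
    exact_mod_cast hlt
  exact Set.disjoint_left.2 fun x hxi hxj => by linarith [hxi.2, hxj.1]

lemma strip_bounds {n j : ℕ} (hj : j < n) {δ : ℝ} (hδ : 0 ≤ δ) (hδn : δ ≤ π / (2 * n)) :
    0 ≤ j * π / n + δ ∧ j * π / n + δ ≤ (j + 1) * π / n - δ ∧ (j + 1) * π / n - δ ≤ π := by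
  have hn : (0 : ℝ) < n := by exact_mod_cast (show 0 < n by omega)
  have hjn : (j : ℝ) + 1 ≤ n := by exact_mod_cast hj
  rw [show π / (2 * (n : ℝ)) = π / n / 2 by ring] at hδn
  refine ⟨by positivity, ?_, ?_⟩
  · rw [add_mul, add_div, one_mul]
    linarith
  · have : (j + 1) * π / n ≤ π := by
      rw [div_le_iff₀ hn]
      nlinarith [pi_pos]
    linarith

lemma neg_one_pow_mul_mul_pos {x y : ℝ} {i j e : ℕ} (hx : 0 < (-1) ^ i * x)
    (hy : 0 < (-1) ^ j * y) (he : Even (i + j + e)) : 0 < (-1) ^ e * (x * y) := by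
  have hsign : (-1 : ℝ) ^ e = (-1) ^ (i + j) := by
    rw [neg_one_pow_eq_pow_mod_two, neg_one_pow_eq_pow_mod_two (i + j)]
    congr 1
    grind
  rw [hsign, pow_add]
  linarith [mul_pos hx hy]

def PairSatoTateEquidistributed (θ₁ θ₂ : ℕ → ℝ) : Prop :=
  ∀ a₁ b₁ a₂ b₂ : ℝ, 0 ≤ a₁ → a₁ ≤ b₁ → b₁ ≤ π → 0 ≤ a₂ → a₂ ≤ b₂ → b₂ ≤ π →
    Tendsto (primeProportion fun p => θ₁ p ∈ Set.Icc a₁ b₁ ∧ θ₂ p ∈ Set.Icc a₂ b₂) atTop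
      (𝓝 ((4 / π ^ 2) * ∫ t₁ in Set.Icc a₁ b₁, ∫ t₂ in Set.Icc a₂ b₂, sin t₁ ^ 2 * sin t₂ ^ 2))

namespace PairSatoTateEquidistributed

variable {θ₁ θ₂ : ℕ → ℝ}

lemma tendsto_primeProportion (h : PairSatoTateEquidistributed θ₁ θ₂) {a₁ b₁ a₂ b₂ : ℝ}
    (ha₁ : 0 ≤ a₁) (hab₁ : a₁ ≤ b₁) (hb₁ : b₁ ≤ π) (ha₂ : 0 ≤ a₂) (hab₂ : a₂ ≤ b₂) (hb₂ : b₂ ≤ π) :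
    Tendsto (primeProportion fun p => θ₁ p ∈ Set.Icc a₁ b₁ ∧ θ₂ p ∈ Set.Icc a₂ b₂) atTop
      (𝓝 (satoTateMass a₁ b₁ * satoTateMass a₂ b₂)) := by
  convert h a₁ b₁ a₂ b₂ ha₁ hab₁ hb₁ ha₂ hab₂ hb₂ using 2
  simp only [integral_const_mul, integral_mul_const, integral_Icc_eq_integral_Ioc,
    ← intervalIntegral.integral_of_le hab₁, ← intervalIntegral.integral_of_le hab₂, satoTateMass]
  ring

lemma eventually_lt_primeProportion_sign (h : PairSatoTateEquidistributed θ₁ θ₂) {c₁ c₂ : ℕ → ℝ}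
    (hc₁ : ∀ p : ℕ, p.Prime → c₁ p ∈ Set.Icc (-1 : ℝ) 1)
    (hc₂ : ∀ p : ℕ, p.Prime → c₂ p ∈ Set.Icc (-1 : ℝ) 1) {ν : ℕ} (hν : Odd ν) (e : ℕ)
    {a : ℝ} (ha : a < 1 / 2) :
    ∀ᶠ x in atTop, a < primeProportion
      (fun p => 0 < (-1) ^ e * (signTerm ν θ₁ c₁ p * signTerm ν θ₂ c₂ p)) x := by
  obtain ⟨δ, ⟨hδ, hδν⟩, hsum⟩ :=
    exists_lt_sum_satoTateMass_strips (n := ν + 1) hν.add_one (by omega) e ha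
  have hω : (0 : ℝ) < ν + 1 := by positivity
  have hδπ : (ν + 1) * δ < π := by
    push_cast at hδν
    rw [lt_div_iff₀ (by positivity)] at hδν
    nlinarith
  push_cast at hsum
  refine eventually_lt_primeProportion _
    (P := fun ij p => θ₁ p ∈ Set.Icc (ij.1 * π / (ν + 1) + δ) ((ij.1 + 1) * π / (ν + 1) - δ) ∧
      θ₂ p ∈ Set.Icc (ij.2 * π / (ν + 1) + δ) ((ij.2 + 1) * π / (ν + 1) - δ)) ?_ ?_ ?_ hsum
  · rintro ij - kl - hne
    refine Set.disjoint_left.2 fun p ⟨hi, hj⟩ ⟨hk, hl⟩ => ?_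
    by_cases hik : ij.1 = kl.1
    · exact Set.disjoint_left.1 (disjoint_strips hω hδ fun hjl => hne (Prod.ext hik hjl)) hj hl
    · exact Set.disjoint_left.1 (disjoint_strips hω hδ hik) hi hk
  · filter_upwards [eventually_neg_one_pow_mul_signTerm_pos hc₁ hδ hδπ,
      eventually_neg_one_pow_mul_signTerm_pos hc₂ hδ hδπ] with p h₁ h₂ hp ij hij ⟨hθ₁, hθ₂⟩
    exact neg_one_pow_mul_mul_pos (h₁ hp _ hθ₁) (h₂ hp _ hθ₂) (mem_filter.1 hij).2
  · intro ij hij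
    obtain ⟨hi, hj⟩ := mem_product.1 (mem_filter.1 hij).1
    obtain ⟨hi₁, hi₂, hi₃⟩ := strip_bounds (mem_range.1 hi) hδ.le hδν.le
    obtain ⟨hj₁, hj₂, hj₃⟩ := strip_bounds (mem_range.1 hj) hδ.le hδν.le
    push_cast at hi₁ hi₂ hi₃ hj₁ hj₂ hj₃
    exact h.tendsto_primeProportion hi₁ hi₂ hi₃ hj₁ hj₂ hj₃

end PairSatoTateEquidistributed

theorem half_integral_sign_density_pos_general
    (θ₁ θ₂ : ℕ → ℝ)
    (hequi : ∀ a₁ b₁ a₂ b₂ : ℝ,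
      0 ≤ a₁ → a₁ ≤ b₁ → b₁ ≤ π → 0 ≤ a₂ → a₂ ≤ b₂ → b₂ ≤ π →
      Tendsto (fun x : ℕ =>
        (Nat.card {p : ℕ | p ≤ x ∧ p.Prime ∧
          θ₁ p ∈ Set.Icc a₁ b₁ ∧ θ₂ p ∈ Set.Icc a₂ b₂} : ℝ) /
        (Nat.card {p : ℕ | p ≤ x ∧ p.Prime} : ℝ)) atTop
        (nhds ((4 / π ^ 2) *
          ∫ t₁ in Set.Icc a₁ b₁, ∫ t₂ in Set.Icc a₂ b₂,
            Real.sin t₁ ^ 2 * Real.sin t₂ ^ 2)))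
    (c₁ c₂ : ℕ → ℝ)
    (hc₁ : ∀ p : ℕ, p.Prime → c₁ p ∈ Set.Icc (-1 : ℝ) 1)
    (hc₂ : ∀ p : ℕ, p.Prime → c₂ p ∈ Set.Icc (-1 : ℝ) 1)
    (ν : ℕ) (hν : Odd ν)
    (b₁ b₂ : ℕ → ℝ)
    (hb₁ : ∀ p : ℕ, b₁ p =
      Real.sin (((ν : ℝ) + 1) * θ₁ p) - (c₁ p / Real.sqrt p) * Real.sin ((ν : ℝ) * θ₁ p))
    (hb₂ : ∀ p : ℕ, b₂ p =
      Real.sin (((ν : ℝ) + 1) * θ₂ p) - (c₂ p / Real.sqrt p) * Real.sin ((ν : ℝ) * θ₂ p)) :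
    Tendsto (fun x : ℕ =>
      (Nat.card {p : ℕ | p ≤ x ∧ p.Prime ∧ 0 < b₁ p * b₂ p} : ℝ) /
      (Nat.card {p : ℕ | p ≤ x ∧ p.Prime} : ℝ)) atTop (nhds (1 / 2)) := by
  obtain rfl : b₁ = signTerm ν θ₁ c₁ := funext hb₁
  obtain rfl : b₂ = signTerm ν θ₂ c₂ := funext hb₂
  have hsign := PairSatoTateEquidistributed.eventually_lt_primeProportion_sign hequi hc₁ hc₂ hν
  refine tendsto_primeProportion_of_forall_lt (fun a ha => ?_) (fun a ha => ?_)
  · simpa using hsign 0 ha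
  · filter_upwards [hsign 1 (a := a) (by linarith)] with x hx
    refine hx.trans_le (primeProportion_mono (fun p _ hp => ?_) x)
    rw [pow_one, neg_one_mul] at hp
    exact not_lt.2 (neg_pos.1 hp).le

/-- Analytic core of Theorem 1.3 (positive case): with pair Sato-Tate equidistributed angles
`θᵢ(p) ∈ (0,π)` and `bᵢ(p) = sin((ν+1)θᵢ(p)) − (cᵢ(p)/√p)·sin(νθᵢ(p))`, the set of primes
`p` with `b₁(p)b₂(p) > 0` has natural density `1/2`. -/
theorem half_integral_sign_density_pos
    (θ₁ θ₂ : ℕ → ℝ)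
    (hθ₁ : ∀ p : ℕ, p.Prime → θ₁ p ∈ Set.Ioo 0 π)
    (hθ₂ : ∀ p : ℕ, p.Prime → θ₂ p ∈ Set.Ioo 0 π)
    (hequi : ∀ a₁ b₁ a₂ b₂ : ℝ,
      0 ≤ a₁ → a₁ ≤ b₁ → b₁ ≤ π → 0 ≤ a₂ → a₂ ≤ b₂ → b₂ ≤ π →
      Tendsto (fun x : ℕ =>
        (Nat.card {p : ℕ | p ≤ x ∧ p.Prime ∧
          θ₁ p ∈ Set.Icc a₁ b₁ ∧ θ₂ p ∈ Set.Icc a₂ b₂} : ℝ) /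
        (Nat.card {p : ℕ | p ≤ x ∧ p.Prime} : ℝ)) atTop
        (nhds ((4 / π ^ 2) *
          ∫ t₁ in Set.Icc a₁ b₁, ∫ t₂ in Set.Icc a₂ b₂,
            Real.sin t₁ ^ 2 * Real.sin t₂ ^ 2)))
    (c₁ c₂ : ℕ → ℝ)
    (hc₁ : ∀ p : ℕ, p.Prime → c₁ p ∈ Set.Icc (-1 : ℝ) 1)
    (hc₂ : ∀ p : ℕ, p.Prime → c₂ p ∈ Set.Icc (-1 : ℝ) 1)
    (ν : ℕ) (hν : Odd ν) (hν' : 0 < ν)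
    (b₁ b₂ : ℕ → ℝ)
    (hb₁ : ∀ p : ℕ, b₁ p =
      Real.sin (((ν : ℝ) + 1) * θ₁ p) - (c₁ p / Real.sqrt p) * Real.sin ((ν : ℝ) * θ₁ p))
    (hb₂ : ∀ p : ℕ, b₂ p =
      Real.sin (((ν : ℝ) + 1) * θ₂ p) - (c₂ p / Real.sqrt p) * Real.sin ((ν : ℝ) * θ₂ p)) :
    Tendsto (fun x : ℕ =>
      (Nat.card {p : ℕ | p ≤ x ∧ p.Prime ∧ 0 < b₁ p * b₂ p} : ℝ) /
      (Nat.card {p : ℕ | p ≤ x ∧ p.Prime} : ℝ)) atTop (nhds (1 / 2)) :=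
  half_integral_sign_density_pos_general θ₁ θ₂ hequi c₁ c₂ hc₁ hc₂ ν hν b₁ b₂ hb₁ hb₂
end

section
/- Let θ₁, θ₂ be functions from the set of primes to (0, π) whose pairs are equidistributed with respect to the 2-product Sato-Tate measure, i.e. for all subintervals I₁, I₂ ⊆ [0, π], lim_{x→∞} #{p prime, p ≤ x : (θ₁(p), θ₂(p)) ∈ I₁ × I₂} / #{p prime, p ≤ x} = (4/π²)·∫_{I₁}∫_{I₂} sin²(t₁) sin²(t₂) dt₂ dt₁. Let c₁, c₂ be functions from the set of primes to [−1, 1], let ν be a positive odd integer, and for i = 1, 2 set bᵢ(p) = sin((ν+1)θᵢ(p)) − (cᵢ(p)/√p)·sin(νθᵢ(p)). Then the set of primes p with b₁(p)·b₂(p) < 0 has natural density 1/2, and the set of primes p with b₁(p)·b₂(p) = 0 has natural density 0. -/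
/-!
Put `k = ν + 1`, which is even, and shrink each of the `k` intervals `[jπ/k, (j+1)π/k]` by `ε`
at both ends to a good interval. On the `j`-th good interval `sin (k θ)` has sign `(-1)^j` and
size at least `sin (k ε)`, which beats the perturbation `(c/√p) sin (ν θ)` once `p > 1/sin (k ε)²`;
so for large `p` the sign of `b₁(p) b₂(p)` is `(-1)^(j+l)` on the good cell `(j, l)`.

If `ρ` is the Sato–Tate mass of the union of the good intervals, equidistribution gives the good
cells density `ρ²`, and the cells with `j + l` odd density `ρ²/2`: the reflection `θ ↦ π - θ`
preserves `sin²` and maps the `j`-th good interval to the `(k-1-j)`-th, which has the other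
parity because `k` is even. The primes outside all good cells have density `1 - ρ²`, and
`ρ ≥ 1 - 4kε/π`, so letting `ε → 0` gives densities `1/2` and `0`.
-/

open Real Filter MeasureTheory Set

-- Equal to `0` for `x < 2`, where both counts vanish.
noncomputable def primeRatio (Q : ℕ → Prop) (x : ℕ) : ℝ :=
  (Nat.card {p : ℕ | p ≤ x ∧ p.Prime ∧ Q p} : ℝ) / (Nat.card {p : ℕ | p ≤ x ∧ p.Prime} : ℝ)

namespace primeRatio

open Finset

theorem eq_card_filter_div (Q : ℕ → Prop) [DecidablePred Q] (x : ℕ) :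
    primeRatio Q x = (#{p ∈ Nat.primesLE x | Q p} : ℝ) / Nat.primeCounting x := by
  have hQ : {p : ℕ | p ≤ x ∧ p.Prime ∧ Q p} = ↑{p ∈ Nat.primesLE x | Q p} := by
    ext p; simp [Nat.mem_primesLE, and_assoc]
  have hT : {p : ℕ | p ≤ x ∧ p.Prime} = ↑(Nat.primesLE x) := by
    ext p; simp [Nat.mem_primesLE]
  rw [primeRatio, hQ, hT, Nat.card_coe_set_eq, Nat.card_coe_set_eq, Set.ncard_coe_finset,
    Set.ncard_coe_finset, Nat.primesLE_card_eq_primeCounting]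

theorem nonneg (Q : ℕ → Prop) (x : ℕ) : 0 ≤ primeRatio Q x := by
  unfold primeRatio; positivity

theorem mono {Q R : ℕ → Prop} (h : ∀ p, p.Prime → Q p → R p) (x : ℕ) :
    primeRatio Q x ≤ primeRatio R x := by
  classical
  rw [eq_card_filter_div, eq_card_filter_div]
  gcongr with p hp
  exact h p (Nat.prime_of_mem_primesLE hp)

theorem or_le (Q R : ℕ → Prop) (x : ℕ) :
    primeRatio (fun p => Q p ∨ R p) x ≤ primeRatio Q x + primeRatio R x := by
  classical
  rw [eq_card_filter_div, eq_card_filter_div, eq_card_filter_div, ← add_div, filter_or]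
  gcongr
  exact_mod_cast Finset.card_union_le _ _

theorem add_not_le_one (Q : ℕ → Prop) (x : ℕ) :
    primeRatio Q x + primeRatio (fun p => ¬ Q p) x ≤ 1 := by
  classical
  rw [eq_card_filter_div, eq_card_filter_div, ← add_div, ← Nat.cast_add,
    card_filter_add_card_filter_not, Nat.primesLE_card_eq_primeCounting]
  exact div_self_le_one _

theorem exists_eq_sum {ι : Type*} (s : Finset ι) (Q : ι → ℕ → Prop)
    (hQ : ∀ i ∈ s, ∀ j ∈ s, i ≠ j → ∀ p, Q i p → ¬ Q j p) (x : ℕ) :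
    primeRatio (fun p => ∃ i ∈ s, Q i p) x = ∑ i ∈ s, primeRatio (Q i) x := by
  classical
  have hunion : {p ∈ Nat.primesLE x | ∃ i ∈ s, Q i p} =
      s.biUnion fun i => {p ∈ Nat.primesLE x | Q i p} := by
    ext p; simp only [Finset.mem_filter, Finset.mem_biUnion]; tauto
  simp only [eq_card_filter_div, ← sum_div, hunion]
  rw [card_biUnion fun i hi j hj hij => disjoint_filter.2 fun p _ => hQ i hi j hj hij p]
  push_cast
  rfl

theorem tendsto_lt (N : ℕ) : Tendsto (primeRatio (· < N)) atTop (nhds 0) := by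
  classical
  have hbound : ∀ x, primeRatio (· < N) x ≤ N / Nat.primeCounting x := fun x => by
    rw [eq_card_filter_div]
    gcongr
    calc #{p ∈ Nat.primesLE x | p < N} ≤ #(range N) :=
          card_le_card fun p hp => mem_range.2 (mem_filter.1 hp).2
      _ = N := card_range N
  exact tendsto_of_tendsto_of_tendsto_of_le_of_le tendsto_const_nhds
    (tendsto_const_nhds.div_atTop (tendsto_natCast_atTop_atTop.comp Nat.tendsto_primeCounting))
    (nonneg _) hbound

end primeRatio

theorem tendsto_of_forall_bounds {α : Type*} {f : Filter α} {u : α → ℝ} {L : ℝ}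
    (h : ∀ η > 0, ∃ l U : α → ℝ, ∃ a b : ℝ, L - η < a ∧ b < L + η ∧
      Tendsto l f (nhds a) ∧ Tendsto U f (nhds b) ∧ ∀ x, l x ≤ u x ∧ u x ≤ U x) :
    Tendsto u f (nhds L) := by
  refine tendsto_order.2 ⟨fun a' ha' => ?_, fun b' hb' => ?_⟩
  · obtain ⟨l, _, a, _, ha, -, hl, -, hlu⟩ := h (L - a') (by linarith)
    exact (hl.eventually (lt_mem_nhds (by linarith))).mono fun x hx => hx.trans_le (hlu x).1
  · obtain ⟨_, U, _, b, -, hb, -, hU, hlu⟩ := h (b' - L) (by linarith)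
    exact (hU.eventually (gt_mem_nhds (by linarith))).mono fun x hx => (hlu x).2.trans_lt hx

noncomputable def satoTate (s : Set ℝ) : ℝ := 2 / π * ∫ t in s, sin t ^ 2

theorem satoTate_mul_satoTate (s s' : Set ℝ) :
    satoTate s * satoTate s' = 4 / π ^ 2 * ∫ t₁ in s, ∫ t₂ in s', sin t₁ ^ 2 * sin t₂ ^ 2 := by
  simp only [satoTate, integral_const_mul, integral_mul_const]
  ring

theorem satoTate_Icc {a b : ℝ} (hab : a ≤ b) :
    satoTate (Icc a b) = 2 / π * ∫ t in a..b, sin t ^ 2 := by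
  rw [satoTate, integral_Icc_eq_integral_Ioc, intervalIntegral.integral_of_le hab]

theorem satoTate_Icc_pi_sub (a b : ℝ) : satoTate (Icc (π - b) (π - a)) = satoTate (Icc a b) := by
  rcases le_or_gt a b with hab | hab
  · rw [satoTate_Icc hab, satoTate_Icc (by linarith),
      ← intervalIntegral.integral_comp_sub_left (fun t => sin t ^ 2)]
    simp only [sin_pi_sub]
  · rw [Icc_eq_empty_of_lt hab, Icc_eq_empty_of_lt (by linarith)]

theorem integral_sin_sq_le_add {a a' b' b : ℝ} (ha : a ≤ a') (hb : b' ≤ b) :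
    ∫ t in a..b, sin t ^ 2 ≤ (∫ t in a'..b', sin t ^ 2) + (a' - a) + (b - b') := by
  have hint (c d : ℝ) : IntervalIntegrable (fun t => sin t ^ 2) volume c d :=
    (continuous_sin.pow 2).intervalIntegrable c d
  have hside {c d : ℝ} (hcd : c ≤ d) : ∫ t in c..d, sin t ^ 2 ≤ d - c := by
    have h := intervalIntegral.norm_integral_le_of_norm_le_const (a := c) (b := d) (C := 1)
      (f := fun t => sin t ^ 2) fun t _ => by simpa using sin_sq_le_one t
    rw [abs_of_nonneg (sub_nonneg.2 hcd), one_mul] at h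
    exact (le_abs_self _).trans h
  rw [← intervalIntegral.integral_add_adjacent_intervals (hint a a') (hint a' b),
    ← intervalIntegral.integral_add_adjacent_intervals (hint a' b') (hint b' b)]
  linarith [hside ha, hside hb]

theorem sin_le_sin_of_le_of_le_pi_sub {a x : ℝ} (ha : -(π / 2) ≤ a) (hax : a ≤ x)
    (hx : x ≤ π - a) : sin a ≤ sin x := by
  rcases le_or_gt x (π / 2) with h | h
  · exact sin_le_sin_of_le_of_le_pi_div_two ha h hax
  · rw [← sin_pi_sub x]
    exact sin_le_sin_of_le_of_le_pi_div_two ha (by linarith) (by linarith)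

def goodIcc (k j : ℕ) (ε : ℝ) : Set ℝ := Icc (j * π / k + ε) ((j + 1) * π / k - ε)

section goodIcc

variable {k j : ℕ} {ε : ℝ}

theorem sin_le_neg_one_pow_mul_sin_s14 {t : ℝ} (hk : 0 < k) (hε : 0 ≤ ε) (ht : t ∈ goodIcc k j ε) :
    sin (k * ε) ≤ (-1) ^ j * sin (k * t) := by
  have hkR : (0 : ℝ) < k := Nat.cast_pos.2 hk
  have hlo : k * ε ≤ k * t - j * π := by
    have := mul_le_mul_of_nonneg_left ht.1 hkR.le
    rw [mul_add, mul_div_cancel₀ _ hkR.ne'] at this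
    linarith
  have hhi : k * t - j * π ≤ π - k * ε := by
    have := mul_le_mul_of_nonneg_left ht.2 hkR.le
    rw [mul_sub, mul_div_cancel₀ _ hkR.ne'] at this
    linarith
  rw [← sin_sub_nat_mul_pi]
  exact sin_le_sin_of_le_of_le_pi_sub (by nlinarith [pi_pos]) hlo hhi

theorem goodIcc_disjoint {j' : ℕ} (hε : 0 < ε) (hjj' : j ≠ j') :
    Disjoint (goodIcc k j ε) (goodIcc k j' ε) := by
  wlog hlt : j < j' generalizing j j'
  · exact (this hjj'.symm (by omega)).symm
  refine Set.disjoint_left.2 fun t ht ht' => ?_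
  have hjj : ((j : ℝ) + 1) * π / k ≤ j' * π / k := by
    gcongr; exact_mod_cast hlt
  linarith [ht.2, ht'.1]

theorem goodIcc_endpoints_ordered (hε : 0 ≤ ε) (hεk : 2 * ε ≤ π / k) (hj : j < k) :
    0 ≤ j * π / k + ε ∧ j * π / k + ε ≤ (j + 1) * π / k - ε ∧ (j + 1) * π / k - ε ≤ π := by
  have hkR : (0 : ℝ) < k := Nat.cast_pos.2 (by omega)
  have hj' : (j : ℝ) + 1 ≤ k := by exact_mod_cast hj
  refine ⟨by positivity, by rw [add_mul, add_div, one_mul]; linarith, ?_⟩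
  have : (j + 1) * π / k ≤ π := by rw [div_le_iff₀ hkR]; nlinarith [pi_pos]
  linarith

theorem satoTate_goodIcc_reflect (hj : j < k) :
    satoTate (goodIcc k (k - 1 - j) ε) = satoTate (goodIcc k j ε) := by
  have hk : (k : ℝ) ≠ 0 := by norm_cast; omega
  have hcast : ((k - 1 - j : ℕ) : ℝ) = k - (j + 1) := by
    rw [Nat.sub_sub, Nat.cast_sub (by omega)]; push_cast; ring
  rw [goodIcc, goodIcc, ← satoTate_Icc_pi_sub, hcast]
  congr 2 <;> field_simp <;> ring

theorem sum_neg_one_pow_mul_satoTate_goodIcc (hk : Even k) :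
    ∑ j ∈ Finset.range k, (-1) ^ j * satoTate (goodIcc k j ε) = 0 := by
  have h := Finset.sum_range_reflect (fun j => (-1 : ℝ) ^ j * satoTate (goodIcc k j ε)) k
  have hterm : ∀ j ∈ Finset.range k, (-1 : ℝ) ^ (k - 1 - j) * satoTate (goodIcc k (k - 1 - j) ε)
      = -((-1) ^ j * satoTate (goodIcc k j ε)) := fun j hj => by
    have hj := Finset.mem_range.1 hj
    have hpow : (-1 : ℝ) ^ (k - 1 - j) * (-1) ^ (j + 1) = 1 := by
      rw [← pow_add, show k - 1 - j + (j + 1) = k by omega, hk.neg_one_pow]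
    have hsign : (-1 : ℝ) ^ (k - 1 - j) = -(-1) ^ j := by
      rw [eq_inv_of_mul_eq_one_left hpow, ← inv_pow, inv_neg, inv_one, pow_succ, mul_neg_one]
    rw [satoTate_goodIcc_reflect hj, hsign, neg_mul]
  rw [Finset.sum_congr rfl hterm, Finset.sum_neg_distrib] at h
  linarith

theorem one_sub_le_sum_satoTate_goodIcc (hk : 0 < k) (hε : 0 ≤ ε) (hεk : 2 * ε ≤ π / k) :
    1 - 4 * k * ε / π ≤ ∑ j ∈ Finset.range k, satoTate (goodIcc k j ε) := by
  have hkR : (0 : ℝ) < k := Nat.cast_pos.2 hk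
  set z : ℕ → ℝ := fun j => j * π / k
  have hfull : ∑ j ∈ Finset.range k, ∫ t in z j..z (j + 1), sin t ^ 2 = π / 2 := by
    rw [intervalIntegral.sum_integral_adjacent_intervals (f := fun t => sin t ^ 2) fun j _ =>
      (continuous_sin.pow 2).intervalIntegrable _ _]
    simp [z, hkR.ne', integral_sin_sq]
  have hpiece (j : ℕ) (hj : j < k) :
      ∫ t in z j..z (j + 1), sin t ^ 2 ≤ π / 2 * satoTate (goodIcc k j ε) + 2 * ε := by
    obtain ⟨-, hle, -⟩ := goodIcc_endpoints_ordered hε hεk hj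
    have h := integral_sin_sq_le_add (a := z j) (a' := z j + ε) (b' := z (j + 1) - ε)
      (b := z (j + 1)) (by linarith) (by linarith)
    rw [goodIcc, satoTate_Icc hle, ← mul_assoc,
      show π / 2 * (2 / π) = 1 by field_simp, one_mul]
    simp only [z] at h ⊢
    push_cast at h ⊢
    linarith
  have h := Finset.sum_le_sum fun j (hj : j ∈ Finset.range k) => hpiece j (Finset.mem_range.1 hj)
  rw [hfull, Finset.sum_add_distrib, ← Finset.mul_sum, Finset.sum_const, Finset.card_range,
    nsmul_eq_mul] at h
  rw [show 1 - 4 * k * ε / π = (π - 4 * k * ε) / π by field_simp, div_le_iff₀ pi_pos]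
  nlinarith [pi_pos]

end goodIcc

theorem eventually_neg_one_pow_mul_pos {ν : ℕ} {ε : ℝ} (hε : 0 < ε) (hνε : ((ν : ℝ) + 1) * ε < π)
    {θ c b : ℕ → ℝ} (hc : ∀ p : ℕ, p.Prime → c p ∈ Icc (-1 : ℝ) 1)
    (hb : ∀ p : ℕ, b p = sin (((ν : ℝ) + 1) * θ p) - (c p / √p) * sin ((ν : ℝ) * θ p)) :
    ∀ᶠ p : ℕ in atTop, p.Prime → ∀ j, θ p ∈ goodIcc (ν + 1) j ε → 0 < (-1) ^ j * b p := by
  set s := sin (((ν : ℝ) + 1) * ε)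
  have hs : 0 < s := sin_pos_of_pos_of_lt_pi (by positivity) hνε
  filter_upwards [tendsto_natCast_atTop_atTop.eventually_gt_atTop ((1 / s) ^ 2)]
    with p hp hprime j hθ
  have hsqrt : 1 / s < √p := (lt_sqrt (by positivity)).2 hp
  have hsqrt_pos : 0 < √p := hsqrt.trans' (by positivity)
  have hperturb : |c p / √p * sin (ν * θ p)| < s := by
    rw [abs_mul, abs_div, abs_of_pos hsqrt_pos]
    calc |c p| / √p * |sin (ν * θ p)| ≤ 1 / √p * 1 := by
          gcongr
          · exact abs_le.2 (hc p hprime)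
          · exact abs_sin_le_one _
      _ < s := by rw [mul_one]; exact (div_lt_comm₀ hs hsqrt_pos).1 hsqrt
  have hsin := sin_le_neg_one_pow_mul_sin_s14 (Nat.succ_pos ν) hε.le hθ
  have hle_abs : (-1) ^ j * (c p / √p * sin (ν * θ p)) ≤ |c p / √p * sin (ν * θ p)| :=
    (le_abs_self _).trans (by rw [abs_mul, abs_pow, abs_neg, abs_one, one_pow, one_mul])
  push_cast at hsin
  rw [hb, mul_sub]
  linarith

def goodPair (θ₁ θ₂ : ℕ → ℝ) (k : ℕ) (ε : ℝ) (jl : ℕ × ℕ) (p : ℕ) : Prop :=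
  θ₁ p ∈ goodIcc k jl.1 ε ∧ θ₂ p ∈ goodIcc k jl.2 ε

def oddPairs (n : ℕ) : Finset (ℕ × ℕ) :=
  (Finset.range n ×ˢ Finset.range n).filter fun jl => Odd (jl.1 + jl.2)

theorem two_mul_sum_oddPairs {R : Type*} [CommRing R] (f : ℕ → R) (n : ℕ) :
    2 * ∑ jl ∈ oddPairs n, f jl.1 * f jl.2 =
      (∑ j ∈ Finset.range n, f j) ^ 2 - (∑ j ∈ Finset.range n, (-1) ^ j * f j) ^ 2 := by
  rw [oddPairs, Finset.sum_filter, Finset.mul_sum, sq, sq, Finset.sum_mul_sum, Finset.sum_mul_sum,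
    ← Finset.sum_sub_distrib, Finset.sum_product]
  refine Finset.sum_congr rfl fun j _ => ?_
  rw [← Finset.sum_sub_distrib]
  refine Finset.sum_congr rfl fun l _ => ?_
  rcases Nat.even_or_odd (j + l) with h | h
  · have hpow : (-1 : R) ^ j * (-1) ^ l = 1 := by rw [← pow_add, h.neg_one_pow]
    rw [if_neg (Nat.not_odd_iff_even.2 h)]
    linear_combination (f j * f l) * hpow
  · have hpow : (-1 : R) ^ j * (-1) ^ l = -1 := by rw [← pow_add, h.neg_one_pow]
    rw [if_pos h]
    linear_combination (f j * f l) * hpow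

def SatoTatePairEquidistributed (θ₁ θ₂ : ℕ → ℝ) : Prop :=
  ∀ a₁ b₁ a₂ b₂ : ℝ, 0 ≤ a₁ → a₁ ≤ b₁ → b₁ ≤ π → 0 ≤ a₂ → a₂ ≤ b₂ → b₂ ≤ π →
    Tendsto (primeRatio fun p => θ₁ p ∈ Icc a₁ b₁ ∧ θ₂ p ∈ Icc a₂ b₂) atTop
      (nhds (satoTate (Icc a₁ b₁) * satoTate (Icc a₂ b₂)))

section limits

variable {θ₁ θ₂ : ℕ → ℝ} {k : ℕ} {ε : ℝ}

theorem SatoTatePairEquidistributed.tendsto_primeRatio_exists_goodPair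
    (h : SatoTatePairEquidistributed θ₁ θ₂) (hε : 0 < ε) (hεk : 2 * ε ≤ π / k)
    {s : Finset (ℕ × ℕ)} (hs : s ⊆ Finset.range k ×ˢ Finset.range k) :
    Tendsto (primeRatio fun p => ∃ jl ∈ s, goodPair θ₁ θ₂ k ε jl p) atTop
      (nhds (∑ jl ∈ s, satoTate (goodIcc k jl.1 ε) * satoTate (goodIcc k jl.2 ε))) := by
  have hdisj : ∀ i ∈ s, ∀ i' ∈ s, i ≠ i' → ∀ p,
      goodPair θ₁ θ₂ k ε i p → ¬ goodPair θ₁ θ₂ k ε i' p := by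
    rintro ⟨j, l⟩ - ⟨j', l'⟩ - hne p hp hp'
    by_cases hjj : j = j'
    · have hll : l ≠ l' := fun hll => hne (by rw [hjj, hll])
      exact Set.disjoint_left.1 (goodIcc_disjoint hε hll) hp.2 hp'.2
    · exact Set.disjoint_left.1 (goodIcc_disjoint hε hjj) hp.1 hp'.1
  unfold SatoTatePairEquidistributed at h
  rw [funext (primeRatio.exists_eq_sum s _ hdisj)]
  refine tendsto_finsetSum _ fun jl hjl => ?_
  obtain ⟨hj, hl⟩ := Finset.mem_product.1 (hs hjl)
  obtain ⟨h₁, h₂, h₃⟩ := goodIcc_endpoints_ordered hε.le hεk (Finset.mem_range.1 hj)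
  obtain ⟨h₄, h₅, h₆⟩ := goodIcc_endpoints_ordered hε.le hεk (Finset.mem_range.1 hl)
  exact h _ _ _ _ h₁ h₂ h₃ h₄ h₅ h₆

theorem SatoTatePairEquidistributed.tendsto_primeRatio_exists_goodPair_range
    (h : SatoTatePairEquidistributed θ₁ θ₂) (hε : 0 < ε) (hεk : 2 * ε ≤ π / k) :
    Tendsto (primeRatio fun p => ∃ jl ∈ Finset.range k ×ˢ Finset.range k,
        goodPair θ₁ θ₂ k ε jl p) atTop
      (nhds ((∑ j ∈ Finset.range k, satoTate (goodIcc k j ε)) ^ 2)) := by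
  rw [sq, Finset.sum_mul_sum, ← Finset.sum_product']
  exact h.tendsto_primeRatio_exists_goodPair hε hεk subset_rfl

theorem SatoTatePairEquidistributed.tendsto_primeRatio_exists_goodPair_oddPairs
    (h : SatoTatePairEquidistributed θ₁ θ₂) (hk : Even k) (hε : 0 < ε) (hεk : 2 * ε ≤ π / k) :
    Tendsto (primeRatio fun p => ∃ jl ∈ oddPairs k, goodPair θ₁ θ₂ k ε jl p) atTop
      (nhds ((∑ j ∈ Finset.range k, satoTate (goodIcc k j ε)) ^ 2 / 2)) := by
  have hsum := two_mul_sum_oddPairs (fun j => satoTate (goodIcc k j ε)) k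
  rw [sum_neg_one_pow_mul_satoTate_goodIcc hk, sq 0, mul_zero, sub_zero] at hsum
  rw [← hsum, mul_div_cancel_left₀ _ two_ne_zero]
  exact h.tendsto_primeRatio_exists_goodPair hε hεk (Finset.filter_subset _ _)

end limits

section bounds

variable {G : ℕ × ℕ → ℕ → Prop} {f : ℕ → ℝ} {k P₀ : ℕ}

theorem primeRatio_exists_oddPairs_le
    (hsign : ∀ p ≥ P₀, p.Prime → ∀ jl, G jl p → 0 < (-1) ^ (jl.1 + jl.2) * f p) (x : ℕ) :
    primeRatio (fun p => ∃ jl ∈ oddPairs k, G jl p) x ≤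
      primeRatio (fun p => f p < 0) x + primeRatio (· < P₀) x := by
  refine (primeRatio.mono (R := fun p => f p < 0 ∨ p < P₀) (fun p hp ⟨jl, hjl, hG⟩ => ?_) x).trans
    (primeRatio.or_le _ _ x)
  refine or_iff_not_imp_right.2 fun hP => ?_
  have h := hsign p (not_lt.1 hP) hp jl hG
  rw [(Finset.mem_filter.1 hjl).2.neg_one_pow] at h
  linarith

theorem primeRatio_neg_le
    (hsign : ∀ p ≥ P₀, p.Prime → ∀ jl, G jl p → 0 < (-1) ^ (jl.1 + jl.2) * f p) (x : ℕ) :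
    primeRatio (fun p => f p < 0) x ≤ primeRatio (fun p => ∃ jl ∈ oddPairs k, G jl p) x +
      (1 - primeRatio (fun p => ∃ jl ∈ Finset.range k ×ˢ Finset.range k, G jl p) x) +
      primeRatio (· < P₀) x := by
  have hcover (p : ℕ) (hp : p.Prime) (hf : f p < 0) : (∃ jl ∈ oddPairs k, G jl p) ∨
      (¬ (∃ jl ∈ Finset.range k ×ˢ Finset.range k, G jl p) ∨ p < P₀) := by
    rcases lt_or_ge p P₀ with hP | hP
    · exact Or.inr (Or.inr hP)
    by_cases hgood : ∃ jl ∈ Finset.range k ×ˢ Finset.range k, G jl p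
    · obtain ⟨jl, hjl, hG⟩ := hgood
      have h := hsign p hP hp jl hG
      refine Or.inl ⟨jl, Finset.mem_filter.2 ⟨hjl, ?_⟩, hG⟩
      rcases Nat.even_or_odd (jl.1 + jl.2) with he | ho
      · rw [he.neg_one_pow] at h; linarith
      · exact ho
    · exact Or.inr (Or.inl hgood)
  linarith [primeRatio.mono hcover x, primeRatio.or_le (fun p => ∃ jl ∈ oddPairs k, G jl p)
    (fun p => (¬ ∃ jl ∈ Finset.range k ×ˢ Finset.range k, G jl p) ∨ p < P₀) x,
    primeRatio.or_le (fun p => ¬ ∃ jl ∈ Finset.range k ×ˢ Finset.range k, G jl p) (· < P₀) x,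
    primeRatio.add_not_le_one (fun p => ∃ jl ∈ Finset.range k ×ˢ Finset.range k, G jl p) x]

theorem primeRatio_eq_zero_le
    (hsign : ∀ p ≥ P₀, p.Prime → ∀ jl, G jl p → 0 < (-1) ^ (jl.1 + jl.2) * f p) (x : ℕ) :
    primeRatio (fun p => f p = 0) x ≤
      (1 - primeRatio (fun p => ∃ jl ∈ Finset.range k ×ˢ Finset.range k, G jl p) x) +
      primeRatio (· < P₀) x := by
  have hcover (p : ℕ) (hp : p.Prime) (hf : f p = 0) :
      (¬ ∃ jl ∈ Finset.range k ×ˢ Finset.range k, G jl p) ∨ p < P₀ := by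
    refine or_iff_not_imp_right.2 fun hP ⟨jl, _, hG⟩ => ?_
    have h := hsign p (not_lt.1 hP) hp jl hG
    rw [hf, mul_zero] at h
    exact h.false
  linarith [primeRatio.mono hcover x,
    primeRatio.or_le (fun p => ¬ ∃ jl ∈ Finset.range k ×ˢ Finset.range k, G jl p) (· < P₀) x,
    primeRatio.add_not_le_one (fun p => ∃ jl ∈ Finset.range k ×ˢ Finset.range k, G jl p) x]

end bounds

theorem exists_one_sub_lt_sq_sum_satoTate_goodIcc {k : ℕ} (hk : 0 < k) {η : ℝ} (hη : 0 < η) :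
    ∃ ε > 0, 2 * ε ≤ π / k ∧ 1 - η < (∑ j ∈ Finset.range k, satoTate (goodIcc k j ε)) ^ 2 := by
  set δ := min (1 / 2) (η / 4)
  have hδ : 0 < δ := lt_min (by norm_num) (by positivity)
  have hkR : (0 : ℝ) < k := Nat.cast_pos.2 hk
  have hεk : 2 * (π * δ / (4 * k)) ≤ π / k := by
    rw [show 2 * (π * δ / (4 * k)) = π / k * δ / 2 by field_simp; ring]
    have : π / k * δ ≤ π / k * 1 := by gcongr; linarith [min_le_left (1 / 2 : ℝ) (η / 4)]
    linarith [div_pos pi_pos hkR]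
  refine ⟨π * δ / (4 * k), by positivity, hεk, ?_⟩
  have h := one_sub_le_sum_satoTate_goodIcc hk (by positivity) hεk
  rw [show 4 * k * (π * δ / (4 * k)) / π = δ by field_simp] at h
  nlinarith [min_le_left (1 / 2 : ℝ) (η / 4), min_le_right (1 / 2 : ℝ) (η / 4)]

theorem tendsto_primeRatio_neg_and_eq_zero {θ₁ θ₂ f : ℕ → ℝ} {k : ℕ} (hk : Even k) (hk0 : 0 < k)
    (h : SatoTatePairEquidistributed θ₁ θ₂)
    (hsign : ∀ ε > 0, 2 * ε ≤ π / k → ∀ᶠ p in atTop,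
      p.Prime → ∀ jl, goodPair θ₁ θ₂ k ε jl p → 0 < (-1) ^ (jl.1 + jl.2) * f p) :
    Tendsto (primeRatio fun p => f p < 0) atTop (nhds (1 / 2)) ∧
      Tendsto (primeRatio fun p => f p = 0) atTop (nhds 0) := by
  refine ⟨tendsto_of_forall_bounds fun η hη => ?_, tendsto_of_forall_bounds fun η hη => ?_⟩
  all_goals
    obtain ⟨ε, hε, hεk, hρ⟩ := exists_one_sub_lt_sq_sum_satoTate_goodIcc hk0 (by positivity : 0 < η)
    obtain ⟨P₀, hP₀⟩ := eventually_atTop.1 (hsign ε hε hεk)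
    have hall := h.tendsto_primeRatio_exists_goodPair_range hε hεk
    have hsmall := primeRatio.tendsto_lt P₀
  · have hodd := h.tendsto_primeRatio_exists_goodPair_oddPairs hk hε hεk
    refine ⟨_, _, _, _, ?_, ?_, hodd.sub hsmall, (hodd.add (tendsto_const_nhds.sub hall)).add hsmall,
      fun x => ⟨by linarith [primeRatio_exists_oddPairs_le (k := k) hP₀ x],
        primeRatio_neg_le hP₀ x⟩⟩ <;> linarith
  · refine ⟨fun _ => 0, _, 0, _, by linarith, ?_, tendsto_const_nhds,
      (tendsto_const_nhds.sub hall).add hsmall,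
      fun x => ⟨primeRatio.nonneg _ x, primeRatio_eq_zero_le hP₀ x⟩⟩
    linarith

theorem half_integral_sign_density_neg_zero_general
    (θ₁ θ₂ : ℕ → ℝ)
    (hequi : ∀ a₁ b₁ a₂ b₂ : ℝ,
      0 ≤ a₁ → a₁ ≤ b₁ → b₁ ≤ π → 0 ≤ a₂ → a₂ ≤ b₂ → b₂ ≤ π →
      Tendsto (fun x : ℕ =>
        (Nat.card {p : ℕ | p ≤ x ∧ p.Prime ∧
          θ₁ p ∈ Set.Icc a₁ b₁ ∧ θ₂ p ∈ Set.Icc a₂ b₂} : ℝ) /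
        (Nat.card {p : ℕ | p ≤ x ∧ p.Prime} : ℝ)) atTop
        (nhds ((4 / π ^ 2) *
          ∫ t₁ in Set.Icc a₁ b₁, ∫ t₂ in Set.Icc a₂ b₂,
            Real.sin t₁ ^ 2 * Real.sin t₂ ^ 2)))
    (c₁ c₂ : ℕ → ℝ)
    (hc₁ : ∀ p : ℕ, p.Prime → c₁ p ∈ Set.Icc (-1 : ℝ) 1)
    (hc₂ : ∀ p : ℕ, p.Prime → c₂ p ∈ Set.Icc (-1 : ℝ) 1)
    (ν : ℕ) (hν : Odd ν)
    (b₁ b₂ : ℕ → ℝ)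
    (hb₁ : ∀ p : ℕ, b₁ p =
      Real.sin (((ν : ℝ) + 1) * θ₁ p) - (c₁ p / Real.sqrt p) * Real.sin ((ν : ℝ) * θ₁ p))
    (hb₂ : ∀ p : ℕ, b₂ p =
      Real.sin (((ν : ℝ) + 1) * θ₂ p) - (c₂ p / Real.sqrt p) * Real.sin ((ν : ℝ) * θ₂ p)) :
    Tendsto (fun x : ℕ =>
      (Nat.card {p : ℕ | p ≤ x ∧ p.Prime ∧ b₁ p * b₂ p < 0} : ℝ) /
      (Nat.card {p : ℕ | p ≤ x ∧ p.Prime} : ℝ)) atTop (nhds (1 / 2)) ∧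
    Tendsto (fun x : ℕ =>
      (Nat.card {p : ℕ | p ≤ x ∧ p.Prime ∧ b₁ p * b₂ p = 0} : ℝ) /
      (Nat.card {p : ℕ | p ≤ x ∧ p.Prime} : ℝ)) atTop (nhds 0) := by
  have hST : SatoTatePairEquidistributed θ₁ θ₂ := fun a₁ b₁ a₂ b₂ h₁ h₂ h₃ h₄ h₅ h₆ => by
    rw [satoTate_mul_satoTate]
    exact hequi a₁ b₁ a₂ b₂ h₁ h₂ h₃ h₄ h₅ h₆
  refine tendsto_primeRatio_neg_and_eq_zero (f := fun p => b₁ p * b₂ p) hν.add_one ν.succ_pos hST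
    fun ε hε hεk => ?_
  have hνε : ((ν : ℝ) + 1) * ε < π := by
    have hν1 : (0 : ℝ) < ν + 1 := by positivity
    push_cast at hεk
    rw [le_div_iff₀ hν1] at hεk
    nlinarith [pi_pos]
  filter_upwards [eventually_neg_one_pow_mul_pos hε hνε hc₁ hb₁,
    eventually_neg_one_pow_mul_pos hε hνε hc₂ hb₂] with p h₁ h₂ hp ⟨j, l⟩ ⟨hj, hl⟩
  have h := mul_pos (h₁ hp j hj) (h₂ hp l hl)
  rw [pow_add]
  linarith

/-- Analytic core of Theorem 1.3 (positive case): with pair Sato-Tate equidistributed angles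
`θᵢ(p) ∈ (0,π)` and `bᵢ(p) = sin((ν+1)θᵢ(p)) − (cᵢ(p)/√p)·sin(νθᵢ(p))`, the set of primes
`p` with `b₁(p)b₂(p) < 0` has natural density `1/2`, and `b₁(p)b₂(p) = 0` has density `0`. -/
theorem half_integral_sign_density_neg_zero
    (θ₁ θ₂ : ℕ → ℝ)
    (hθ₁ : ∀ p : ℕ, p.Prime → θ₁ p ∈ Set.Ioo 0 π)
    (hθ₂ : ∀ p : ℕ, p.Prime → θ₂ p ∈ Set.Ioo 0 π)
    (hequi : ∀ a₁ b₁ a₂ b₂ : ℝ,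
      0 ≤ a₁ → a₁ ≤ b₁ → b₁ ≤ π → 0 ≤ a₂ → a₂ ≤ b₂ → b₂ ≤ π →
      Tendsto (fun x : ℕ =>
        (Nat.card {p : ℕ | p ≤ x ∧ p.Prime ∧
          θ₁ p ∈ Set.Icc a₁ b₁ ∧ θ₂ p ∈ Set.Icc a₂ b₂} : ℝ) /
        (Nat.card {p : ℕ | p ≤ x ∧ p.Prime} : ℝ)) atTop
        (nhds ((4 / π ^ 2) *
          ∫ t₁ in Set.Icc a₁ b₁, ∫ t₂ in Set.Icc a₂ b₂,
            Real.sin t₁ ^ 2 * Real.sin t₂ ^ 2)))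
    (c₁ c₂ : ℕ → ℝ)
    (hc₁ : ∀ p : ℕ, p.Prime → c₁ p ∈ Set.Icc (-1 : ℝ) 1)
    (hc₂ : ∀ p : ℕ, p.Prime → c₂ p ∈ Set.Icc (-1 : ℝ) 1)
    (ν : ℕ) (hν : Odd ν) (hν' : 0 < ν)
    (b₁ b₂ : ℕ → ℝ)
    (hb₁ : ∀ p : ℕ, b₁ p =
      Real.sin (((ν : ℝ) + 1) * θ₁ p) - (c₁ p / Real.sqrt p) * Real.sin ((ν : ℝ) * θ₁ p))
    (hb₂ : ∀ p : ℕ, b₂ p =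
      Real.sin (((ν : ℝ) + 1) * θ₂ p) - (c₂ p / Real.sqrt p) * Real.sin ((ν : ℝ) * θ₂ p)) :
    Tendsto (fun x : ℕ =>
      (Nat.card {p : ℕ | p ≤ x ∧ p.Prime ∧ b₁ p * b₂ p < 0} : ℝ) /
      (Nat.card {p : ℕ | p ≤ x ∧ p.Prime} : ℝ)) atTop (nhds (1 / 2)) ∧
    Tendsto (fun x : ℕ =>
      (Nat.card {p : ℕ | p ≤ x ∧ p.Prime ∧ b₁ p * b₂ p = 0} : ℝ) /
      (Nat.card {p : ℕ | p ≤ x ∧ p.Prime} : ℝ)) atTop (nhds 0) :=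
  half_integral_sign_density_neg_zero_general θ₁ θ₂ hequi c₁ c₂ hc₁ hc₂ ν hν b₁ b₂ hb₁ hb₂
end
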